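/- arXiv:1910.06623 — 7 statements merged into one kernel-verified Lean document; each statement's English description precedes it below -/
import Mathlib

section
/- If s > 0 and s ∉ [t − √t, t + √t], then there exists x_+ > 0 such that F_s(x) > 0 for all x ≥ x_+; in particular, F_s has a zero on (0,∞). -/
/-!
As `x → ∞`, `φ(x) - φ(x + t) = -t/(2x²) + O(x⁻³)` and, with `v = (x + t)/(x + s)`,
`v - 1 - log v = (t - s)²/(2x²) + O(x⁻³)`; hence `x² F_s(x) → ((t - s)² - t)/2`, which is positive
exactly when `|t - s| > √t`. The expansion of `φ` needs no asymptotics of `ψ`: the function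
`φ(y) + 1/(2y) + 1/(12y²)` tends to `0` at infinity and its unit-step difference is elementary,
with derivative `-1/(6y³(y+1)³)`, so it is antitone. As `x → 0⁺`, `φ(x) ≤ log 2 - 1/2 - 1/(2x)`
drives `F_s` to `-∞`, and the intermediate value theorem produces the zero.
-/

open Real Filter Topology

/-- The digamma function `ψ(x) = d/dx log Γ(x)`. -/
noncomputable def digamma (x : ℝ) : ℝ := deriv (fun y => Real.log (Real.Gamma y)) x

/-- `φ(x) := ψ(x) - log x`. -/
noncomputable def phiFn (x : ℝ) : ℝ := digamma x - Real.log x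

/-- `F_s(x) := φ(x) − φ(x+t) + (x+t)/(x+s) − log((x+t)/(x+s)) − 1`. -/
noncomputable def Fs (t s x : ℝ) : ℝ :=
  phiFn x - phiFn (x + t) + (x + t) / (x + s) - Real.log ((x + t) / (x + s)) - 1

open Set

lemma analyticAt_Gamma {x : ℝ} (hx : 0 < x) : AnalyticAt ℝ Gamma x := by
  have hopen : IsOpen {z : ℂ | 0 < z.re} := isOpen_lt continuous_const Complex.continuous_re
  have hdiff : DifferentiableOn ℂ Complex.Gamma {z : ℂ | 0 < z.re} := fun z hz =>
    (Complex.differentiableAt_Gamma z fun m hm => by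
      have : (0 : ℝ) ≤ m := m.cast_nonneg
      simp [hm] at hz; linarith).differentiableWithinAt
  have hC : AnalyticAt ℂ Complex.Gamma x := hdiff.analyticAt (hopen.mem_nhds (by simpa))
  simpa [Complex.Gamma_ofReal] using hC.re_ofReal

lemma analyticAt_log_Gamma {x : ℝ} (hx : 0 < x) : AnalyticAt ℝ (fun y => log (Gamma y)) x :=
  (analyticAt_Gamma hx).log (Gamma_pos_of_pos hx)

lemma hasDerivAt_log_Gamma {x : ℝ} (hx : 0 < x) :
    HasDerivAt (fun y => log (Gamma y)) (digamma x) x :=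
  (analyticAt_log_Gamma hx).differentiableAt.hasDerivAt

lemma continuousOn_digamma : ContinuousOn digamma (Ioi 0) := fun _ hx =>
  (analyticAt_log_Gamma hx).deriv.continuousAt.continuousWithinAt

lemma log_Gamma_add_one {x : ℝ} (hx : 0 < x) :
    log (Gamma (x + 1)) = log (Gamma x) + log x := by
  rw [Gamma_add_one hx.ne', log_mul hx.ne' (Gamma_pos_of_pos hx).ne', add_comm]

lemma digamma_add_one {x : ℝ} (hx : 0 < x) : digamma (x + 1) = digamma x + x⁻¹ := by
  have hshift : HasDerivAt (fun y => log (Gamma (y + 1))) (digamma (x + 1)) x := by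
    simpa using (hasDerivAt_log_Gamma (by linarith : 0 < x + 1)).comp_add_const x 1
  have hsum : HasDerivAt (fun y => log (Gamma y) + log y) (digamma x + x⁻¹) x :=
    (hasDerivAt_log_Gamma hx).add (hasDerivAt_log hx.ne')
  refine hshift.unique (hsum.congr_of_eventuallyEq ?_)
  filter_upwards [Ioi_mem_nhds hx] with y hy using log_Gamma_add_one hy

/- The slope of the convex function `log Γ` over `[x, x + 1]` is `log x`; it lies between the
derivatives `ψ(x)` and `ψ(x + 1) = ψ(x) + 1/x` at the endpoints. -/
lemma digamma_le_log {x : ℝ} (hx : 0 < x) : digamma x ≤ log x := by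
  have h := convexOn_log_Gamma.le_slope_of_hasDerivAt (mem_Ioi.2 hx)
    (mem_Ioi.2 (by linarith : 0 < x + 1)) (lt_add_one x) (hasDerivAt_log_Gamma hx)
  simpa [slope_def_field, log_Gamma_add_one hx] using h

lemma log_le_digamma_add_inv {x : ℝ} (hx : 0 < x) : log x ≤ digamma x + x⁻¹ := by
  have h := convexOn_log_Gamma.slope_le_of_hasDerivAt (mem_Ioi.2 hx)
    (mem_Ioi.2 (by linarith : 0 < x + 1)) (lt_add_one x) (hasDerivAt_log_Gamma (by linarith))
  simpa [slope_def_field, log_Gamma_add_one hx, digamma_add_one hx] using h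

lemma phiFn_nonpos {x : ℝ} (hx : 0 < x) : phiFn x ≤ 0 := by
  linarith [digamma_le_log hx, show phiFn x = digamma x - log x from rfl]

lemma neg_inv_le_phiFn {x : ℝ} (hx : 0 < x) : -x⁻¹ ≤ phiFn x := by
  linarith [log_le_digamma_add_inv hx, show phiFn x = digamma x - log x from rfl]

lemma tendsto_phiFn_atTop : Tendsto phiFn atTop (𝓝 0) := by
  have hinv : Tendsto (fun x : ℝ => -x⁻¹) atTop (𝓝 0) := by
    simpa using (tendsto_inv_atTop_zero (𝕜 := ℝ)).neg
  refine tendsto_of_tendsto_of_tendsto_of_le_of_le' hinv tendsto_const_nhds ?_ ?_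
  · filter_upwards [eventually_gt_atTop 0] with x hx using neg_inv_le_phiFn hx
  · filter_upwards [eventually_gt_atTop 0] with x hx using phiFn_nonpos hx

lemma phiFn_sub_phiFn_add_one {x : ℝ} (hx : 0 < x) :
    phiFn x - phiFn (x + 1) = log (x + 1) - log x - x⁻¹ := by
  simp only [phiFn, digamma_add_one hx]
  ring

lemma phiFn_le {x : ℝ} (hx : 0 < x) : phiFn x ≤ log 2 - 2⁻¹ - (2 * x)⁻¹ := by
  have hhalf : log ((x + 1) / (2 * x)) ≤ (x + 1) / (2 * x) - 1 :=
    log_le_sub_one_of_pos (by positivity)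
  rw [log_div (by positivity) (by positivity), log_mul two_ne_zero hx.ne'] at hhalf
  have hstep := phiFn_sub_phiFn_add_one hx
  have hnonpos := phiFn_nonpos (by linarith : 0 < x + 1)
  have hsplit : (x + 1) / (2 * x) = 2⁻¹ + (2 * x)⁻¹ := by field_simp
  have hinv : x⁻¹ = 2 * (2 * x)⁻¹ := by field_simp
  linarith

theorem antitoneOn_of_tendsto_of_antitoneOn_sub_add_one {f : ℝ → ℝ} {a c : ℝ}
    (hf : Tendsto f atTop (𝓝 a)) (hstep : AntitoneOn (fun y => f y - f (y + 1)) (Ioi c)) :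
    AntitoneOn f (Ioi c) := by
  intro x hx y hy hxy
  have hshift : ∀ n : ℕ, f (x + n) - f (y + n) ≤ f x - f y := by
    intro n
    induction n with
    | zero => simp
    | succ n ih =>
      have hmem : ∀ z ∈ Ioi c, z + n ∈ Ioi c := fun z hz => by
        simp only [mem_Ioi] at hz ⊢; linarith [n.cast_nonneg (α := ℝ)]
      have := hstep (hmem x hx) (hmem y hy) (by linarith)
      push_cast
      simp only [← add_assoc] at this ⊢
      linarith
  have hlim : Tendsto (fun n : ℕ => f (x + n) - f (y + n)) atTop (𝓝 (a - a)) := by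
    have hN := tendsto_natCast_atTop_atTop (R := ℝ)
    exact (hf.comp (tendsto_atTop_add_const_left _ x hN)).sub
      (hf.comp (tendsto_atTop_add_const_left _ y hN))
  linarith [le_of_tendsto' hlim hshift]

lemma antitoneOn_phiFn_correction_sub_add_one :
    AntitoneOn (fun y => (phiFn y + (2 * y)⁻¹ + (12 * y ^ 2)⁻¹)
      - (phiFn (y + 1) + (2 * (y + 1))⁻¹ + (12 * (y + 1) ^ 2)⁻¹)) (Ioi 0) := by
  let step : ℝ → ℝ := fun y => log (y + 1) - log y - (2 * y)⁻¹ - (2 * (y + 1))⁻¹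
    + (12 * y ^ 2)⁻¹ - (12 * (y + 1) ^ 2)⁻¹
  have hderiv : ∀ y ∈ Ioi (0 : ℝ), HasDerivAt step (-(6 * y ^ 3 * (y + 1) ^ 3)⁻¹) y := by
    intro y (hy : 0 < y)
    have h1 := ((hasDerivAt_id y).add_const 1).log (by positivity)
    have h2 := hasDerivAt_log hy.ne'
    have h3 := ((hasDerivAt_id y).const_mul 2).inv (by positivity)
    have h4 := (((hasDerivAt_id y).add_const 1).const_mul 2).inv (by positivity)
    have h5 := ((hasDerivAt_pow 2 y).const_mul 12).inv (by positivity)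
    have h6 := ((((hasDerivAt_id y).add_const 1).pow 2).const_mul 12).inv
      (by positivity : (12 : ℝ) * (y + 1) ^ 2 ≠ 0)
    refine (((((h1.sub h2).sub h3).sub h4).add h5).sub h6).congr_deriv ?_
    simp only [id, Pi.pow_apply]
    field_simp
    ring
  have hstep : AntitoneOn step (Ioi 0) := by
    refine antitoneOn_of_hasDerivWithinAt_nonpos (f' := fun y => -(6 * y ^ 3 * (y + 1) ^ 3)⁻¹)
      (convex_Ioi 0) (fun y hy => (hderiv y hy).continuousAt.continuousWithinAt) ?_ ?_ <;>
      rw [interior_Ioi]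
    · exact fun y hy => (hderiv y hy).hasDerivWithinAt
    · intro y (hy : 0 < y)
      simp only [neg_nonpos]
      positivity
  refine hstep.congr fun y (hy : 0 < y) => ?_
  have hphi : phiFn y = phiFn (y + 1) + (log (y + 1) - log y - y⁻¹) := by
    linarith [phiFn_sub_phiFn_add_one hy]
  simp only [step, hphi]
  field_simp
  ring

lemma antitoneOn_phiFn_correction :
    AntitoneOn (fun y => phiFn y + (2 * y)⁻¹ + (12 * y ^ 2)⁻¹) (Ioi 0) := by
  refine antitoneOn_of_tendsto_of_antitoneOn_sub_add_one (a := 0) ?_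
    antitoneOn_phiFn_correction_sub_add_one
  have h2 : Tendsto (fun y : ℝ => (2 * y)⁻¹) atTop (𝓝 0) :=
    tendsto_inv_atTop_zero.comp (tendsto_id.const_mul_atTop two_pos)
  have h12 : Tendsto (fun y : ℝ => (12 * y ^ 2)⁻¹) atTop (𝓝 0) :=
    tendsto_inv_atTop_zero.comp ((tendsto_pow_atTop two_ne_zero).const_mul_atTop (by norm_num))
  simpa using (tendsto_phiFn_atTop.add h2).add h12

lemma le_phiFn_sub_phiFn_add {x t : ℝ} (hx : 0 < x) (ht : 0 ≤ t) :
    (2 * (x + t))⁻¹ - (2 * x)⁻¹ + ((12 * (x + t) ^ 2)⁻¹ - (12 * x ^ 2)⁻¹)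
      ≤ phiFn x - phiFn (x + t) := by
  have := antitoneOn_phiFn_correction (mem_Ioi.2 hx) (mem_Ioi.2 (by linarith : 0 < x + t))
    (by linarith)
  simp only at this
  linarith

lemma sq_div_two_sub_le_sub_one_sub_log {v : ℝ} (hv : |v - 1| ≤ 1 / 2) :
    (v - 1) ^ 2 / 2 - 2 * |v - 1| ^ 3 ≤ v - 1 - log v := by
  have htaylor := abs_log_sub_add_sum_range_le (x := 1 - v) (by rw [abs_sub_comm]; linarith) 2
  rw [abs_sub_comm 1 v] at htaylor
  have hden : |v - 1| ^ 3 / (1 - |v - 1|) ≤ 2 * |v - 1| ^ 3 := by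
    rw [div_le_iff₀ (by linarith)]
    nlinarith [pow_nonneg (abs_nonneg (v - 1)) 3]
  simp only [Finset.sum_range_succ, Finset.sum_range_zero, sub_sub_cancel] at htaylor
  norm_num at htaylor
  linarith [(abs_le.1 (htaylor.trans hden)).2]

lemma eventually_Fs_pos {t s : ℝ} (ht : 0 ≤ t) (hgap : t < (t - s) ^ 2) :
    ∀ᶠ x in atTop, 0 < Fs t s x := by
  -- `x⁻² q(x⁻¹)` is the lower bound for `F_s(x)` obtained below, and `q 0 = ((t - s)² - t)/2`.
  let q : ℝ → ℝ := fun y => -t / (2 * (1 + t * y)) + ((12 * (1 + t * y) ^ 2)⁻¹ - 12⁻¹)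
    + ((t - s) ^ 2 / (2 * (1 + s * y) ^ 2) - 2 * (|t - s| ^ 3 * y / (1 + s * y) ^ 3))
  have hq : Tendsto (fun x => q x⁻¹) atTop (𝓝 (q 0)) :=
    (show ContinuousAt q 0 by fun_prop (disch := norm_num)).tendsto.comp tendsto_inv_atTop_zero
  have hq0 : 0 < q 0 := by norm_num [q]; linarith
  filter_upwards [hq.eventually (eventually_gt_nhds hq0), eventually_gt_atTop 0,
    eventually_gt_atTop (-s), eventually_ge_atTop (2 * |t - s| - s)] with x hqx hx hxs hxts
  have hxs' : 0 < x + s := by linarith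
  have hv : (x + t) / (x + s) - 1 = (t - s) / (x + s) := by field_simp; ring
  have habs : |(t - s) / (x + s)| = |t - s| / (x + s) := by rw [abs_div, abs_of_pos hxs']
  have hlog := sq_div_two_sub_le_sub_one_sub_log (v := (x + t) / (x + s)) (by
    rw [hv, habs, div_le_iff₀ hxs']; linarith)
  rw [hv, habs] at hlog
  have hphi := le_phiFn_sub_phiFn_add hx ht
  have hscale : x⁻¹ ^ 2 * q x⁻¹ = (2 * (x + t))⁻¹ - (2 * x)⁻¹
      + ((12 * (x + t) ^ 2)⁻¹ - (12 * x ^ 2)⁻¹)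
      + (((t - s) / (x + s)) ^ 2 / 2 - 2 * (|t - s| / (x + s)) ^ 3) := by
    have : x + t ≠ 0 := by positivity
    simp only [q]
    field_simp
    ring
  have hpos : 0 < x⁻¹ ^ 2 * q x⁻¹ := by positivity
  unfold Fs
  linarith

lemma tendsto_Fs_nhdsGT_zero {t s : ℝ} (ht : 0 < t) (hs : s ≠ 0) :
    Tendsto (Fs t s) (𝓝[>] 0) atBot := by
  let regular : ℝ → ℝ := fun x => log 2 - 2⁻¹ + (x + t)⁻¹
    + ((x + t) / (x + s) - log ((x + t) / (x + s)) - 1)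
  have hregular : ContinuousAt regular 0 := by fun_prop (disch := simp [ht.ne', hs])
  have hpole : Tendsto (fun x : ℝ => -(2 * x)⁻¹) (𝓝[>] 0) atBot := by
    refine (tendsto_neg_atTop_atBot.comp ((tendsto_inv_nhdsGT_zero (𝕜 := ℝ)).atTop_div_const
      (two_pos : (0 : ℝ) < 2))).congr fun x => ?_
    simp [mul_comm, div_eq_mul_inv]
  refine tendsto_atBot_mono' _ ?_
    (hpole.atBot_add (hregular.tendsto.mono_left nhdsWithin_le_nhds))
  filter_upwards [self_mem_nhdsWithin] with x (hx : 0 < x)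
  have := phiFn_le hx
  have := neg_inv_le_phiFn (by linarith : 0 < x + t)
  unfold Fs
  simp only [regular]
  linarith

lemma continuousOn_Fs {t s : ℝ} (ht : 0 ≤ t) (hs : 0 ≤ s) : ContinuousOn (Fs t s) (Ioi 0) := by
  have hphi : ContinuousOn phiFn (Ioi 0) :=
    continuousOn_digamma.sub (continuousOn_log.mono fun x (hx : 0 < x) => hx.ne')
  have hshift : ContinuousOn (fun x => phiFn (x + t)) (Ioi 0) :=
    hphi.comp (by fun_prop) fun x (hx : 0 < x) => show 0 < x + t by linarith
  intro x (hx : 0 < x)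
  have hxs : x + s ≠ 0 := by positivity
  have hxt : (x + t) / (x + s) ≠ 0 := by positivity
  have := hphi x hx
  have := hshift x hx
  unfold Fs
  fun_prop (disch := assumption)

lemma lt_sq_sub_of_notMem_Icc {t s : ℝ} (hs : s ∉ Icc (t - √t) (t + √t)) : t < (t - s) ^ 2 := by
  rw [mem_Icc, not_and_or, not_le, not_le] at hs
  have habs : √t < |t - s| := by
    rcases hs with h | h
    · exact lt_abs.2 (Or.inl (by linarith))
    · exact lt_abs.2 (Or.inr (by linarith))
  simpa only [sq_abs] using lt_sq_of_sqrt_lt habs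

/-- with `t = d/2`, `d ≥ 1` an integer, if `s > 0` and
`s ∉ [t − √t, t + √t]`, then there exists `x₊ > 0` with `F_s(x) > 0` for all `x ≥ x₊`;
in particular `F_s` has a zero on `(0,∞)`. -/
theorem Fs_pos_eventually_and_has_zero (d : ℕ) (hd : 1 ≤ d) (t : ℝ) (ht : t = d / 2)
    (s : ℝ) (hs : 0 < s) (hs' : s ∉ Set.Icc (t - Real.sqrt t) (t + Real.sqrt t)) :
    (∃ xp > (0 : ℝ), ∀ x ≥ xp, 0 < Fs t s x) ∧ ∃ x > (0 : ℝ), Fs t s x = 0 := by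
  have ht0 : 0 < t := by
    have : (1 : ℝ) ≤ d := by exact_mod_cast hd
    rw [ht]
    linarith
  obtain ⟨a, ha⟩ := eventually_atTop.1 (eventually_Fs_pos ht0.le (lt_sq_sub_of_notMem_Icc hs'))
  have hpos : ∀ x ≥ max a 1, 0 < Fs t s x := fun x hx => ha x (le_of_max_le_left hx)
  obtain ⟨x₀, hneg, hx₀⟩ :=
    ((tendsto_Fs_nhdsGT_zero ht0 hs.ne').eventually_lt_atBot 0 |>.and self_mem_nhdsWithin).exists
  obtain ⟨x, hx, hzero⟩ := isPreconnected_Ioi.intermediate_value hx₀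
    (mem_Ioi.2 (by positivity : (0 : ℝ) < max a 1)) (continuousOn_Fs ht0.le hs.le)
    ⟨hneg.le, (hpos _ le_rfl).le⟩
  exact ⟨⟨max a 1, by positivity, hpos⟩, x, hx, hzero⟩
end

section
/- If F(x_0) < 0, then the sequence (x_l)_l is strictly increasing and F(x) < 0 for all x ∈ [x_l, x_{l+1}] and all l ∈ ℕ₀. -/
/-! Since `Fb` is decreasing, `x_l < x_{l+1}` gives `Fa x_{l+2} = -Fb x_{l+1} > -Fb x_l = Fa x_{l+1}`,
so `x_{l+1} < x_{l+2}`; the start `x_0 < x_1` is the hypothesis `F x_0 < 0 = Fa x_1 + Fb x_0`.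
On `[x_l, x_{l+1}]` the monotonicity of both parts gives `F y < Fa x_{l+1} + Fb x_l = 0`. -/

section CrossedSum

variable {Fa Fb : ℝ → ℝ} {s : Set ℝ}

lemma lt_of_add_neg_of_cross_eq_zero (hFa : StrictMonoOn Fa s) {a b : ℝ} (ha : a ∈ s)
    (hb : b ∈ s) (hneg : Fa a + Fb a < 0) (hcross : Fa b + Fb a = 0) : a < b :=
  (hFa.lt_iff_lt ha hb).mp (by linarith)

lemma lt_of_lt_of_cross_eq_zero (hFa : StrictMonoOn Fa s) (hFb : StrictAntiOn Fb s)
    {a b c : ℝ} (ha : a ∈ s) (hb : b ∈ s) (hc : c ∈ s) (hab : a < b)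
    (hcross₁ : Fa b + Fb a = 0) (hcross₂ : Fa c + Fb b = 0) : b < c :=
  have hFb_lt : Fb b < Fb a := hFb ha hb hab
  (hFa.lt_iff_lt hb hc).mp (by linarith)

lemma add_lt_cross_of_mem_Icc [s.OrdConnected] (hFa : StrictMonoOn Fa s)
    (hFb : StrictAntiOn Fb s) {a b y : ℝ} (ha : a ∈ s) (hb : b ∈ s) (hab : a < b)
    (hy : y ∈ Set.Icc a b) : Fa y + Fb y < Fa b + Fb a := by
  have hys : y ∈ s := Set.Icc_subset s ha hb hy
  rcases hy.2.lt_or_eq with hyb | rfl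
  · have hFa_lt : Fa y < Fa b := hFa hys hb hyb
    have hFb_le : Fb y ≤ Fb a := hFb.antitoneOn ha hys hy.1
    linarith
  · linarith [hFb ha hys hab]

theorem strictMono_of_cross_eq_zero (hFa : StrictMonoOn Fa s) (hFb : StrictAntiOn Fb s)
    {x : ℕ → ℝ} (hxs : ∀ l, x l ∈ s) (hstep : ∀ l, Fa (x (l + 1)) + Fb (x l) = 0)
    (hneg : Fa (x 0) + Fb (x 0) < 0) : StrictMono x := by
  refine strictMono_nat_of_lt_succ fun l => ?_
  induction l with
  | zero => exact lt_of_add_neg_of_cross_eq_zero hFa (hxs 0) (hxs 1) hneg (hstep 0)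
  | succ l ih =>
    exact lt_of_lt_of_cross_eq_zero hFa hFb (hxs l) (hxs (l + 1)) (hxs (l + 2)) ih
      (hstep l) (hstep (l + 1))

end CrossedSum

theorem seq_strictMono_of_F_neg_general (Fa Fb : ℝ → ℝ)
    (hFam : StrictMonoOn Fa (Set.Ioi 0)) (hFbm : StrictAntiOn Fb (Set.Ioi 0))
    (x : ℕ → ℝ) (hx0 : 0 < x 0)
    (hstep : ∀ l, 0 < x (l + 1) ∧ Fa (x (l + 1)) + Fb (x l) = 0)
    (hneg : Fa (x 0) + Fb (x 0) < 0) :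
    StrictMono x ∧ ∀ l, ∀ y ∈ Set.Icc (x l) (x (l + 1)), Fa y + Fb y < 0 := by
  have hpos : ∀ l, x l ∈ Set.Ioi 0
    | 0 => hx0
    | l + 1 => (hstep l).1
  have hmono : StrictMono x :=
    strictMono_of_cross_eq_zero hFam hFbm hpos (fun l => (hstep l).2) hneg
  refine ⟨hmono, fun l y hy => ?_⟩
  calc Fa y + Fb y < Fa (x (l + 1)) + Fb (x l) :=
        add_lt_cross_of_mem_Icc hFam hFbm (hpos l) (hpos (l + 1)) (hmono l.lt_succ_self) hy
    _ = 0 := (hstep l).2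

/-- let `F_a, F_b : (0,∞) → ℝ` be continuous, `F_a` strictly increasing, `F_b`
strictly decreasing, `F := F_a + F_b`. Let `x₀ > 0` and let `(x_l)` be the sequence where
`x_{l+1}` is the unique zero in `(0,∞)` of `x ↦ F_a(x) + F_b(x_l)`. If `F(x₀) < 0`, then
`(x_l)` is strictly increasing and `F(x) < 0` for all `x ∈ [x_l, x_{l+1}]`, `l ∈ ℕ₀`. -/
theorem seq_strictMono_of_F_neg (Fa Fb : ℝ → ℝ)
    (hFa : ContinuousOn Fa (Set.Ioi 0)) (hFb : ContinuousOn Fb (Set.Ioi 0))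
    (hFam : StrictMonoOn Fa (Set.Ioi 0)) (hFbm : StrictAntiOn Fb (Set.Ioi 0))
    (x : ℕ → ℝ) (hx0 : 0 < x 0)
    (hstep : ∀ l, 0 < x (l + 1) ∧ Fa (x (l + 1)) + Fb (x l) = 0)
    (huniq : ∀ l, ∀ y > (0 : ℝ), Fa y + Fb (x l) = 0 → y = x (l + 1))
    (hneg : Fa (x 0) + Fb (x 0) < 0) :
    StrictMono x ∧ ∀ l, ∀ y ∈ Set.Icc (x l) (x (l + 1)), Fa y + Fb y < 0 :=
  seq_strictMono_of_F_neg_general Fa Fb hFam hFbm x hx0 hstep hneg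
end

section
/- If F(x_0) > 0, then the sequence (x_l)_l is strictly decreasing and F(x) > 0 for all x ∈ [x_{l+1}, x_l] and all l ∈ ℕ₀. -/
/-! Since `Fa (x (l+1)) + Fb (x l) = 0 < Fa (x l) + Fb (x l)` and `Fa` is increasing,
`x (l+1) < x l`. On `[x (l+1), x l]` we have `Fa y ≥ Fa (x (l+1))` and `Fb y ≥ Fb (x l)`,
one of them strictly, so `F y > 0`; taking `y = x (l+1)` propagates the hypothesis
`F (x l) > 0` by induction. -/

section OneStep

variable {α : Type*} [LinearOrder α] {Fa Fb : α → ℝ} {s : Set α} {a b : α}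

theorem lt_of_add_eq_zero_of_add_pos (hFa : StrictMonoOn Fa s) (ha : a ∈ s) (hb : b ∈ s)
    (hstep : Fa b + Fb a = 0) (hpos : 0 < Fa a + Fb a) : b < a :=
  (hFa.lt_iff_lt hb ha).mp (by linarith)

theorem add_pos_of_mem_Icc_of_add_eq_zero [s.OrdConnected] (hFa : StrictMonoOn Fa s)
    (hFb : StrictAntiOn Fb s) (ha : a ∈ s) (hb : b ∈ s) (hstep : Fa b + Fb a = 0)
    (hba : b < a) {y : α} (hy : y ∈ Set.Icc b a) : 0 < Fa y + Fb y := by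
  have hys : y ∈ s := Set.OrdConnected.out ‹_› hb ha hy
  rcases hy.1.eq_or_lt with rfl | hby
  · linarith [hFb hys ha hba]
  · linarith [hFa hb hys hby, hFb.antitoneOn hys ha hy.2]

end OneStep

theorem seq_strictAnti_of_F_pos_general (Fa Fb : ℝ → ℝ)
    (hFam : StrictMonoOn Fa (Set.Ioi 0)) (hFbm : StrictAntiOn Fb (Set.Ioi 0))
    (x : ℕ → ℝ) (hx0 : 0 < x 0)
    (hstep : ∀ l, 0 < x (l + 1) ∧ Fa (x (l + 1)) + Fb (x l) = 0)
    (hpos : 0 < Fa (x 0) + Fb (x 0)) :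
    StrictAnti x ∧ ∀ l, ∀ y ∈ Set.Icc (x (l + 1)) (x l), 0 < Fa y + Fb y := by
  have hx : ∀ l, x l ∈ Set.Ioi 0
    | 0 => hx0
    | l + 1 => (hstep l).1
  have hlt : ∀ l, 0 < Fa (x l) + Fb (x l) → x (l + 1) < x l := fun l hl =>
    lt_of_add_eq_zero_of_add_pos hFam (hx l) (hx (l + 1)) (hstep l).2 hl
  have hIcc : ∀ l, 0 < Fa (x l) + Fb (x l) →
      ∀ y ∈ Set.Icc (x (l + 1)) (x l), 0 < Fa y + Fb y := fun l hl _ hy =>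
    add_pos_of_mem_Icc_of_add_eq_zero hFam hFbm (hx l) (hx (l + 1)) (hstep l).2 (hlt l hl) hy
  have hF : ∀ l, 0 < Fa (x l) + Fb (x l) := by
    intro l
    induction l with
    | zero => exact hpos
    | succ l ih => exact hIcc l ih _ ⟨le_rfl, (hlt l ih).le⟩
  exact ⟨strictAnti_nat_of_succ_lt fun l => hlt l (hF l), fun l => hIcc l (hF l)⟩

/-- let `F_a, F_b : (0,∞) → ℝ` be continuous, `F_a` strictly increasing, `F_b`
strictly decreasing, `F := F_a + F_b`. Let `x₀ > 0` and let `(x_l)` be the sequence where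
`x_{l+1}` is the unique zero in `(0,∞)` of `x ↦ F_a(x) + F_b(x_l)`. If `F(x₀) > 0`, then
`(x_l)` is strictly decreasing and `F(x) > 0` for all `x ∈ [x_{l+1}, x_l]`, `l ∈ ℕ₀`. -/
theorem seq_strictAnti_of_F_pos (Fa Fb : ℝ → ℝ)
    (hFa : ContinuousOn Fa (Set.Ioi 0)) (hFb : ContinuousOn Fb (Set.Ioi 0))
    (hFam : StrictMonoOn Fa (Set.Ioi 0)) (hFbm : StrictAntiOn Fb (Set.Ioi 0))
    (x : ℕ → ℝ) (hx0 : 0 < x 0)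
    (hstep : ∀ l, 0 < x (l + 1) ∧ Fa (x (l + 1)) + Fb (x l) = 0)
    (huniq : ∀ l, ∀ y > (0 : ℝ), Fa y + Fb (x l) = 0 → y = x (l + 1))
    (hpos : 0 < Fa (x 0) + Fb (x 0)) :
    StrictAnti x ∧ ∀ l, ∀ y ∈ Set.Icc (x (l + 1)) (x l), 0 < Fa y + Fb y :=
  seq_strictAnti_of_F_pos_general Fa Fb hFam hFbm x hx0 hstep hpos
end

section
/- Assume additionally that there exists x_− > 0 with F(x) < 0 for all x < x_− and x_+ > 0 with F(x) > 0 for all x > x_+. Then the sequence (x_l)_l converges to a point x* ∈ (0,∞) with F(x*) = 0. -/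
/-!
Since `F_a (x_{l+1}) = -F_b (x_l)`, the inequality `F (x_l) ≤ 0` says
`F_a (x_l) ≤ F_a (x_{l+1})`, i.e. `x_l ≤ x_{l+1}`; then `F_b (x_{l+1}) ≤ F_b (x_l)` gives
`F (x_{l+1}) ≤ F_a (x_{l+1}) + F_b (x_l) = 0`. So the sign of `F (x_0)` persists along the
sequence, which is therefore monotone, and the sign condition beyond `x_+` (resp. below `x_-`)
bounds it. Its limit is positive, and passing to the limit in `F_a (x_{l+1}) + F_b (x_l) = 0`
shows that it is a zero of `F`.
-/

open Filter Topology

section Monotonicity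

variable {α β : Type*} [LinearOrder α] [AddCommMonoid β] [PartialOrder β]
  [IsOrderedCancelAddMonoid β] {s : Set α} {Fa Fb : α → β} {x : ℕ → α}

theorem monotone_and_add_nonpos (hFa : StrictMonoOn Fa s) (hFb : StrictAntiOn Fb s)
    (hs : ∀ l, x l ∈ s) (hstep : ∀ l, Fa (x (l + 1)) + Fb (x l) = 0)
    (h0 : Fa (x 0) + Fb (x 0) ≤ 0) : Monotone x ∧ ∀ l, Fa (x l) + Fb (x l) ≤ 0 := by
  have succ_step : ∀ l, Fa (x l) + Fb (x l) ≤ 0 →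
      x l ≤ x (l + 1) ∧ Fa (x (l + 1)) + Fb (x (l + 1)) ≤ 0 := by
    intro l hl
    have hFa_le : Fa (x l) ≤ Fa (x (l + 1)) :=
      (add_le_add_iff_right (Fb (x l))).1 (hl.trans_eq (hstep l).symm)
    have hle : x l ≤ x (l + 1) := (hFa.le_iff_le (hs l) (hs (l + 1))).1 hFa_le
    have hFb_le : Fb (x (l + 1)) ≤ Fb (x l) := (hFb.le_iff_ge (hs (l + 1)) (hs l)).2 hle
    exact ⟨hle, (add_le_add_right hFb_le _).trans_eq (hstep l)⟩
  have hF : ∀ l, Fa (x l) + Fb (x l) ≤ 0 := fun l =>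
    Nat.rec h0 (fun l ih => (succ_step l ih).2) l
  exact ⟨monotone_nat_of_le_succ fun l => (succ_step l (hF l)).1, hF⟩

/-- Reversing the orders of both `α` and `β` turns this into `monotone_and_add_nonpos`. -/
theorem antitone_and_add_nonneg (hFa : StrictMonoOn Fa s) (hFb : StrictAntiOn Fb s)
    (hs : ∀ l, x l ∈ s) (hstep : ∀ l, Fa (x (l + 1)) + Fb (x l) = 0)
    (h0 : 0 ≤ Fa (x 0) + Fb (x 0)) : Antitone x ∧ ∀ l, 0 ≤ Fa (x l) + Fb (x l) :=
  monotone_and_add_nonpos (α := αᵒᵈ) (β := βᵒᵈ) hFa.dual hFb.dual hs hstep h0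

end Monotonicity

theorem add_eq_zero_of_tendsto {α β : Type*} [TopologicalSpace α] [TopologicalSpace β]
    [AddZeroClass β] [ContinuousAdd β] [T2Space β] {Fa Fb : α → β} {x : ℕ → α} {a : α}
    (hFa : ContinuousAt Fa a) (hFb : ContinuousAt Fb a)
    (hstep : ∀ l, Fa (x (l + 1)) + Fb (x l) = 0) (hx : Tendsto x atTop (𝓝 a)) :
    Fa a + Fb a = 0 := by
  have hlim : Tendsto (fun l => Fa (x (l + 1)) + Fb (x l)) atTop (𝓝 (Fa a + Fb a)) :=
    (hFa.tendsto.comp (hx.comp (tendsto_add_atTop_nat 1))).add (hFb.tendsto.comp hx)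
  rw [funext hstep] at hlim
  exact tendsto_nhds_unique hlim tendsto_const_nhds

theorem seq_tendsto_zero_of_F_general (Fa Fb : ℝ → ℝ)
    (hFa : ContinuousOn Fa (Set.Ioi 0)) (hFb : ContinuousOn Fb (Set.Ioi 0))
    (hFam : StrictMonoOn Fa (Set.Ioi 0)) (hFbm : StrictAntiOn Fb (Set.Ioi 0))
    (x : ℕ → ℝ) (hx0 : 0 < x 0)
    (hstep : ∀ l, 0 < x (l + 1) ∧ Fa (x (l + 1)) + Fb (x l) = 0)
    (hminus : ∃ xm > (0 : ℝ), ∀ y, 0 < y → y < xm → Fa y + Fb y < 0)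
    (hplus : ∃ xp > (0 : ℝ), ∀ y, xp < y → 0 < Fa y + Fb y) :
    ∃ xstar > (0 : ℝ), Tendsto x atTop (nhds xstar) ∧ Fa xstar + Fb xstar = 0 := by
  have hpos : ∀ l, 0 < x l := fun l => Nat.casesOn l hx0 fun l => (hstep l).1
  have hzero : ∀ l, Fa (x (l + 1)) + Fb (x l) = 0 := fun l => (hstep l).2
  suffices ∃ xstar > (0 : ℝ), Tendsto x atTop (𝓝 xstar) by
    obtain ⟨xstar, hxstar, hlim⟩ := this
    exact ⟨xstar, hxstar, hlim, add_eq_zero_of_tendsto (hFa.continuousAt (Ioi_mem_nhds hxstar))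
      (hFb.continuousAt (Ioi_mem_nhds hxstar)) hzero hlim⟩
  obtain ⟨xm, hxm, hm⟩ := hminus
  obtain ⟨xp, -, hp⟩ := hplus
  rcases le_total (Fa (x 0) + Fb (x 0)) 0 with h0 | h0
  · obtain ⟨hmono, hF⟩ := monotone_and_add_nonpos hFam hFbm hpos hzero h0
    have hbdd : BddAbove (Set.range x) :=
      ⟨xp, Set.forall_mem_range.2 fun l => not_lt.1 fun h => (hF l).not_gt (hp _ h)⟩
    exact ⟨_, hx0.trans_le (le_ciSup hbdd 0), tendsto_atTop_ciSup hmono hbdd⟩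
  · obtain ⟨hanti, hF⟩ := antitone_and_add_nonneg hFam hFbm hpos hzero h0
    have hlb : ∀ l, xm ≤ x l := fun l => not_lt.1 fun h => (hF l).not_gt (hm _ (hpos l) h)
    exact ⟨_, hxm.trans_le (le_ciInf hlb),
      tendsto_atTop_ciInf hanti ⟨xm, Set.forall_mem_range.2 hlb⟩⟩

/-- let `F_a, F_b : (0,∞) → ℝ` be continuous, `F_a` strictly increasing, `F_b`
strictly decreasing, `F := F_a + F_b`. Let `x₀ > 0` and let `(x_l)` be the sequence where
`x_{l+1}` is the unique zero in `(0,∞)` of `x ↦ F_a(x) + F_b(x_l)`. Assume moreover that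
there exists `x₋ > 0` with `F(x) < 0` for all `0 < x < x₋` and `x₊ > 0` with `F(x) > 0` for
all `x > x₊`. Then `(x_l)` converges to a zero `x*` of `F` in `(0,∞)`. -/
theorem seq_tendsto_zero_of_F (Fa Fb : ℝ → ℝ)
    (hFa : ContinuousOn Fa (Set.Ioi 0)) (hFb : ContinuousOn Fb (Set.Ioi 0))
    (hFam : StrictMonoOn Fa (Set.Ioi 0)) (hFbm : StrictAntiOn Fb (Set.Ioi 0))
    (x : ℕ → ℝ) (hx0 : 0 < x 0)
    (hstep : ∀ l, 0 < x (l + 1) ∧ Fa (x (l + 1)) + Fb (x l) = 0)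
    (huniq : ∀ l, ∀ y > (0 : ℝ), Fa y + Fb (x l) = 0 → y = x (l + 1))
    (hminus : ∃ xm > (0 : ℝ), ∀ y, 0 < y → y < xm → Fa y + Fb y < 0)
    (hplus : ∃ xp > (0 : ℝ), ∀ y, xp < y → 0 < Fa y + Fb y) :
    ∃ xstar > (0 : ℝ), Tendsto x atTop (nhds xstar) ∧ Fa xstar + Fb xstar = 0 :=
  seq_tendsto_zero_of_F_general Fa Fb hFa hFb hFam hFbm x hx0 hstep hminus hplus
end

section
/- The sequence (G(x_l))_l is monotone decreasing, and G(x_{l+1}) = G(x_l) holds if and only if x_0 is a critical point of G (i.e. F(x_0) = 0). Moreover, if (x_l)_l converges to a limit x*, then G(x_0) ≥ G(x_1) ≥ G(x*), with equalities if and only if x_0 is a critical point of G. -/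
/-!
Write `F = Fa + Fb`. If `Fa b + Fb a = 0`, then for every `y` strictly between `a` and `b`,
`F y = (Fa y - Fa b) + (Fb y - Fb a)` is a sum of two terms of the sign of `a - b`, while
`G' = F`; so `G` moves from `a` to `b` strictly downhill, and `G (x (l + 1)) < G (x l)` unless
`x (l + 1) = x l`. Moreover `F (x (l + 1)) = Fb (x (l + 1)) - Fb (x l)` vanishes exactly when the
step is trivial, which happens exactly when `F (x l) = 0`; so either `x₀` is a critical point and
the sequence is constant, or every step strictly decreases `G`. The bound by `G x*` follows by
passing to the limit in the antitone sequence `G (x l)`.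
-/

open Real Filter Topology Set

section Step

variable {Fa Fb G : ℝ → ℝ} {s : Set ℝ} {a b : ℝ}

theorem lt_of_hasDerivAt_add_of_step [s.OrdConnected] (hFa : StrictMonoOn Fa s)
    (hFb : StrictAntiOn Fb s) (hG : ∀ y ∈ s, HasDerivAt G (Fa y + Fb y) y)
    (ha : a ∈ s) (hb : b ∈ s) (hab : Fa b + Fb a = 0) (hne : a ≠ b) : G b < G a := by
  have hGc : ∀ {c d}, c ∈ s → d ∈ s → ContinuousOn G (Icc c d) := fun hc hd y hy =>
    (hG y (Set.OrdConnected.out ‹_› hc hd hy)).continuousAt.continuousWithinAt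
  have hmem : ∀ {c d y}, c ∈ s → d ∈ s → y ∈ interior (Icc c d) → y ∈ s := fun hc hd hy =>
    Set.OrdConnected.out ‹_› hc hd (interior_subset hy)
  rcases hne.lt_or_gt with h | h
  · refine strictAntiOn_of_deriv_neg (convex_Icc a b) (hGc ha hb) (fun y hy => ?_)
      (left_mem_Icc.2 h.le) (right_mem_Icc.2 h.le) h
    have hys := hmem ha hb hy
    rw [interior_Icc] at hy
    rw [(hG y hys).deriv]
    linarith [hFa hys hb hy.2, hFb ha hys hy.1]
  · refine strictMonoOn_of_deriv_pos (convex_Icc b a) (hGc hb ha) (fun y hy => ?_)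
      (left_mem_Icc.2 h.le) (right_mem_Icc.2 h.le) h
    have hys := hmem hb ha hy
    rw [interior_Icc] at hy
    rw [(hG y hys).deriv]
    linarith [hFa hb hys hy.1, hFb hys ha hy.2]

theorem eq_iff_of_hasDerivAt_add_of_step [s.OrdConnected] (hFa : StrictMonoOn Fa s)
    (hFb : StrictAntiOn Fb s) (hG : ∀ y ∈ s, HasDerivAt G (Fa y + Fb y) y)
    (ha : a ∈ s) (hb : b ∈ s) (hab : Fa b + Fb a = 0) : G b = G a ↔ b = a :=
  ⟨fun h => by_contra fun hne =>
    (lt_of_hasDerivAt_add_of_step hFa hFb hG ha hb hab (Ne.symm hne)).ne h,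
   fun h => h ▸ rfl⟩

theorem le_of_hasDerivAt_add_of_step [s.OrdConnected] (hFa : StrictMonoOn Fa s)
    (hFb : StrictAntiOn Fb s) (hG : ∀ y ∈ s, HasDerivAt G (Fa y + Fb y) y)
    (ha : a ∈ s) (hb : b ∈ s) (hab : Fa b + Fb a = 0) : G b ≤ G a := by
  rcases eq_or_ne a b with rfl | hne
  · exact le_rfl
  · exact (lt_of_hasDerivAt_add_of_step hFa hFb hG ha hb hab hne).le

theorem add_eq_zero_iff_of_step (hFb : StrictAntiOn Fb s) (ha : a ∈ s) (hb : b ∈ s)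
    (hab : Fa b + Fb a = 0) : Fa b + Fb b = 0 ↔ b = a := by
  rw [← hFb.injOn.eq_iff hb ha]
  constructor <;> intro h <;> linarith

end Step

section Sequence

variable {Fa Fb : ℝ → ℝ} {s : Set ℝ} {x : ℕ → ℝ}

theorem succ_eq_iff_add_eq_zero (hx : ∀ l, x l ∈ s)
    (hstep : ∀ l, Fa (x (l + 1)) + Fb (x l) = 0)
    (huniq : ∀ l, ∀ y ∈ s, Fa y + Fb (x l) = 0 → y = x (l + 1)) (l : ℕ) :
    x (l + 1) = x l ↔ Fa (x l) + Fb (x l) = 0 :=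
  ⟨fun h => h ▸ hstep l, fun h => (huniq l (x l) (hx l) h).symm⟩

theorem add_eq_zero_at_iff_at_zero (hFb : StrictAntiOn Fb s) (hx : ∀ l, x l ∈ s)
    (hstep : ∀ l, Fa (x (l + 1)) + Fb (x l) = 0)
    (huniq : ∀ l, ∀ y ∈ s, Fa y + Fb (x l) = 0 → y = x (l + 1)) (l : ℕ) :
    Fa (x l) + Fb (x l) = 0 ↔ Fa (x 0) + Fb (x 0) = 0 := by
  induction l with
  | zero => rfl
  | succ l ih =>
    rw [add_eq_zero_iff_of_step hFb (hx l) (hx (l + 1)) (hstep l),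
      succ_eq_iff_add_eq_zero hx hstep huniq, ih]

theorem eq_initial_of_add_eq_zero (hFb : StrictAntiOn Fb s) (hx : ∀ l, x l ∈ s)
    (hstep : ∀ l, Fa (x (l + 1)) + Fb (x l) = 0)
    (huniq : ∀ l, ∀ y ∈ s, Fa y + Fb (x l) = 0 → y = x (l + 1))
    (h0 : Fa (x 0) + Fb (x 0) = 0) (l : ℕ) : x l = x 0 := by
  induction l with
  | zero => rfl
  | succ l ih =>
    rw [(succ_eq_iff_add_eq_zero hx hstep huniq l).2
      ((add_eq_zero_at_iff_at_zero hFb hx hstep huniq l).2 h0), ih]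

end Sequence

theorem G_decreasing_along_seq_general (Fa Fb G : ℝ → ℝ)
    (hFam : StrictMonoOn Fa (Set.Ioi 0)) (hFbm : StrictAntiOn Fb (Set.Ioi 0))
    (hG : ∀ y > (0 : ℝ), HasDerivAt G (Fa y + Fb y) y)
    (x : ℕ → ℝ) (hx0 : 0 < x 0)
    (hstep : ∀ l, 0 < x (l + 1) ∧ Fa (x (l + 1)) + Fb (x l) = 0)
    (huniq : ∀ l, ∀ y > (0 : ℝ), Fa y + Fb (x l) = 0 → y = x (l + 1)) :
    (∀ l, G (x (l + 1)) ≤ G (x l)) ∧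
    (∀ l, G (x (l + 1)) = G (x l) ↔ Fa (x 0) + Fb (x 0) = 0) ∧
    (∀ xstar > (0 : ℝ), Tendsto x atTop (nhds xstar) →
      G (x 1) ≤ G (x 0) ∧ G xstar ≤ G (x 1) ∧
      ((G (x 0) = G (x 1) ∧ G (x 1) = G xstar) ↔ Fa (x 0) + Fb (x 0) = 0)) := by
  have hx : ∀ l, x l ∈ Ioi 0 := fun
    | 0 => hx0
    | l + 1 => (hstep l).1
  have hzero : ∀ l, Fa (x (l + 1)) + Fb (x l) = 0 := fun l => (hstep l).2
  have hle : ∀ l, G (x (l + 1)) ≤ G (x l) := fun l =>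
    le_of_hasDerivAt_add_of_step hFam hFbm hG (hx l) (hx (l + 1)) (hzero l)
  have hiff : ∀ l, G (x (l + 1)) = G (x l) ↔ Fa (x 0) + Fb (x 0) = 0 := fun l => by
    rw [eq_iff_of_hasDerivAt_add_of_step hFam hFbm hG (hx l) (hx (l + 1)) (hzero l),
      succ_eq_iff_add_eq_zero hx hzero huniq,
      add_eq_zero_at_iff_at_zero hFbm hx hzero huniq]
  refine ⟨hle, hiff, fun xstar hxstar hlim => ⟨hle 0, ?_, ?_⟩⟩
  · exact (antitone_nat_of_succ_le hle).le_of_tendsto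
      ((hG xstar hxstar).continuousAt.tendsto.comp hlim) 1
  · refine ⟨fun h => (hiff 0).1 h.1.symm, fun h0 => ?_⟩
    have hconst := eq_initial_of_add_eq_zero hFbm hx hzero huniq h0
    have hxstar : xstar = x 0 :=
      tendsto_nhds_unique hlim (tendsto_const_nhds.congr fun l => (hconst l).symm)
    rw [hconst 1, hxstar]
    exact ⟨rfl, rfl⟩

/-- let `F_a, F_b : (0,∞) → ℝ` be continuous, `F_a` strictly increasing, `F_b`
strictly decreasing, `F := F_a + F_b`, and let `G` be an antiderivative of `F` on `(0,∞)`.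
Let `x₀ > 0` and let `(x_l)` be the sequence where `x_{l+1}` is the unique zero in `(0,∞)`
of `x ↦ F_a(x) + F_b(x_l)`. Then `(G(x_l))_l` is monotone decreasing, with
`G(x_{l+1}) = G(x_l)` iff `x₀` is a critical point of `G` (i.e. `F(x₀) = 0`); and if `(x_l)`
converges to some `x* > 0`, then `G(x₀) ≥ G(x₁) ≥ G(x*)`, with equalities iff `x₀` is a
critical point of `G`. -/
theorem G_decreasing_along_seq (Fa Fb G : ℝ → ℝ)
    (hFa : ContinuousOn Fa (Set.Ioi 0)) (hFb : ContinuousOn Fb (Set.Ioi 0))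
    (hFam : StrictMonoOn Fa (Set.Ioi 0)) (hFbm : StrictAntiOn Fb (Set.Ioi 0))
    (hG : ∀ y > (0 : ℝ), HasDerivAt G (Fa y + Fb y) y)
    (x : ℕ → ℝ) (hx0 : 0 < x 0)
    (hstep : ∀ l, 0 < x (l + 1) ∧ Fa (x (l + 1)) + Fb (x l) = 0)
    (huniq : ∀ l, ∀ y > (0 : ℝ), Fa y + Fb (x l) = 0 → y = x (l + 1)) :
    (∀ l, G (x (l + 1)) ≤ G (x l)) ∧
    (∀ l, G (x (l + 1)) = G (x l) ↔ Fa (x 0) + Fb (x 0) = 0) ∧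
    (∀ xstar > (0 : ℝ), Tendsto x atTop (nhds xstar) →
      G (x 1) ≤ G (x 0) ∧ G xstar ≤ G (x 1) ∧
      ((G (x 0) = G (x 1) ∧ G (x 1) = G xstar) ↔ Fa (x 0) + Fb (x 0) = 0)) :=
  G_decreasing_along_seq_general Fa Fb G hFam hFbm hG x hx0 hstep huniq
end

section
/- Let F = F̃_a + F̃_b be another splitting of F into continuous functions with F̃_a strictly increasing and F̃_b strictly decreasing, where F_a and F̃_a are differentiable with F̃_a'(x) > F_a'(x) for all x > 0. Let y_1 be the unique zero of x ↦ F̃_a(x) + F̃_b(x_0) and x_1 the unique zero of x ↦ F_a(x) + F_b(x_0). Then G(x_0) ≥ G(y_1) ≥ G(x_1), with equalities if and only if x_0 is a critical point of G (i.e. F(x_0) = 0). -/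
/-!
Put `c = F(x₀)`. Then `F_a(x₁) - F_a(x₀) = -c = F̃_a(y₁) - F̃_a(x₀)`; since `F̃_a - F_a` is strictly
increasing, `y₁` lies strictly between `x₀` and `x₁` when `c ≠ 0`. Strictly between `x₀` and `x₁`,
monotonicity of `F_a` and `F_b` compares `G' = F_a + F_b` with `F_a(x₁) + F_b(x₀) = 0`, so `G'` has
the sign of `c` there and `G` decreases strictly from `x₀` through `y₁` to `x₁`. When `c = 0` all
three points coincide.
-/

open Set

theorem strictMonoOn_sub_of_hasDerivAt_lt {D : Set ℝ} (hD : Convex ℝ D) {f g f' g' : ℝ → ℝ}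
    (hf : ∀ x ∈ D, HasDerivAt f (f' x) x) (hg : ∀ x ∈ D, HasDerivAt g (g' x) x)
    (hlt : ∀ x ∈ interior D, f' x < g' x) : StrictMonoOn (fun x => g x - f x) D :=
  strictMonoOn_of_hasDerivWithinAt_pos hD
    (HasDerivAt.continuousOn fun x hx => (hg x hx).sub (hf x hx))
    (fun x hx => ((hg x (interior_subset hx)).sub (hf x (interior_subset hx))).hasDerivWithinAt)
    (fun x hx => sub_pos.2 (hlt x hx))

section ShiftedLevels

variable {f g : ℝ → ℝ} {s : Set ℝ} {x₀ x₁ y₁ : ℝ}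

theorem mem_Ioo_of_sub_eq_sub_of_pos (hf : StrictMonoOn f s)
    (hgf : StrictMonoOn (fun x => g x - f x) s) (hx₀ : x₀ ∈ s) (hx₁ : x₁ ∈ s) (hy₁ : y₁ ∈ s)
    (hshift : f x₁ - f x₀ = g y₁ - g x₀) (hpos : 0 < f x₁ - f x₀) : y₁ ∈ Ioo x₀ x₁ := by
  have hg : StrictMonoOn g s := by simpa using hf.add hgf
  have hx₀y₁ : x₀ < y₁ := (hg.lt_iff_lt hx₀ hy₁).mp (by linarith)
  refine ⟨hx₀y₁, (hf.lt_iff_lt hy₁ hx₁).mp ?_⟩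
  linarith [hgf hx₀ hy₁ hx₀y₁]

theorem mem_Ioo_of_sub_eq_sub_of_neg (hf : StrictMonoOn f s)
    (hgf : StrictMonoOn (fun x => g x - f x) s) (hx₀ : x₀ ∈ s) (hx₁ : x₁ ∈ s) (hy₁ : y₁ ∈ s)
    (hshift : f x₁ - f x₀ = g y₁ - g x₀) (hneg : f x₁ - f x₀ < 0) : y₁ ∈ Ioo x₁ x₀ := by
  have hg : StrictMonoOn g s := by simpa using hf.add hgf
  have hy₁x₀ : y₁ < x₀ := (hg.lt_iff_lt hy₁ hx₀).mp (by linarith)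
  refine ⟨(hf.lt_iff_lt hx₁ hy₁).mp ?_, hy₁x₀⟩
  linarith [hgf hy₁ hx₀ hy₁x₀]

end ShiftedLevels

section MonotoneSplitting

variable {G φ ψ : ℝ → ℝ} {a b : ℝ}

theorem strictAntiOn_Icc_of_hasDerivAt_add (hG : ∀ x ∈ Icc a b, HasDerivAt G (φ x + ψ x) x)
    (hφ : StrictMonoOn φ (Icc a b)) (hψ : StrictAntiOn ψ (Icc a b)) (hb : φ b + ψ a = 0) :
    StrictAntiOn G (Icc a b) := by
  refine strictAntiOn_of_hasDerivWithinAt_neg (convex_Icc a b) (HasDerivAt.continuousOn hG)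
    (fun x hx => (hG x (interior_subset hx)).hasDerivWithinAt) fun x hx => ?_
  rw [interior_Icc] at hx
  have hab : a ≤ b := (hx.1.trans hx.2).le
  have hφx := hφ (Ioo_subset_Icc_self hx) (right_mem_Icc.2 hab) hx.2
  have hψx := hψ (left_mem_Icc.2 hab) (Ioo_subset_Icc_self hx) hx.1
  linarith

theorem strictMonoOn_Icc_of_hasDerivAt_add (hG : ∀ x ∈ Icc a b, HasDerivAt G (φ x + ψ x) x)
    (hφ : StrictMonoOn φ (Icc a b)) (hψ : StrictAntiOn ψ (Icc a b)) (ha : φ a + ψ b = 0) :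
    StrictMonoOn G (Icc a b) := by
  have hnegG : StrictAntiOn (fun x => -G x) (Icc a b) :=
    strictAntiOn_Icc_of_hasDerivAt_add (φ := fun x => -ψ x) (ψ := fun x => -φ x)
      (fun x hx => (hG x hx).neg.congr_deriv (by ring)) hψ.neg hφ.neg (by linarith)
  simpa using hnegG.neg

end MonotoneSplitting

theorem G_two_splittings_general (Fa Fb tFa tFb G : ℝ → ℝ)
    (hFam : StrictMonoOn Fa (Set.Ioi 0)) (hFbm : StrictAntiOn Fb (Set.Ioi 0))
    (hsplit : ∀ y > (0 : ℝ), Fa y + Fb y = tFa y + tFb y)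
    (Fa' tFa' : ℝ → ℝ)
    (hFa' : ∀ y > (0 : ℝ), HasDerivAt Fa (Fa' y) y)
    (htFa' : ∀ y > (0 : ℝ), HasDerivAt tFa (tFa' y) y)
    (hlt : ∀ y > (0 : ℝ), Fa' y < tFa' y)
    (hG : ∀ y > (0 : ℝ), HasDerivAt G (Fa y + Fb y) y)
    (x0 x1 y1 : ℝ) (hx0 : 0 < x0)
    (hx1 : 0 < x1) (hx1z : Fa x1 + Fb x0 = 0)
    (hx1u : ∀ z > (0 : ℝ), Fa z + Fb x0 = 0 → z = x1)
    (hy1 : 0 < y1) (hy1z : tFa y1 + tFb x0 = 0)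
    (hy1u : ∀ z > (0 : ℝ), tFa z + tFb x0 = 0 → z = y1) :
    G y1 ≤ G x0 ∧ G x1 ≤ G y1 ∧
    ((G x0 = G y1 ∧ G y1 = G x1) ↔ Fa x0 + Fb x0 = 0) := by
  have hgap := strictMonoOn_sub_of_hasDerivAt_lt (convex_Ioi 0) hFa' htFa'
    fun x hx => hlt x (interior_subset hx)
  have hs0 := hsplit x0 hx0
  have hshift : Fa x1 - Fa x0 = tFa y1 - tFa x0 := by linarith
  have hGIcc {a b : ℝ} (ha : 0 < a) : ∀ x ∈ Icc a b, HasDerivAt G (Fa x + Fb x) x :=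
    fun x hx => hG x (ha.trans_le hx.1)
  have hIcc {a b : ℝ} (ha : 0 < a) : Icc a b ⊆ Ioi 0 := fun x hx => ha.trans_le hx.1
  rcases lt_trichotomy (Fa x0 + Fb x0) 0 with hneg | hzero | hpos
  · obtain ⟨hx0y1, hy1x1⟩ :=
      mem_Ioo_of_sub_eq_sub_of_pos hFam hgap hx0 hx1 hy1 hshift (by linarith)
    have hanti := strictAntiOn_Icc_of_hasDerivAt_add (hGIcc hx0) (hFam.mono (hIcc hx0))
      (hFbm.mono (hIcc hx0)) hx1z
    have hGy1 := hanti (left_mem_Icc.2 (hx0y1.trans hy1x1).le) ⟨hx0y1.le, hy1x1.le⟩ hx0y1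
    have hGx1 := hanti ⟨hx0y1.le, hy1x1.le⟩ (right_mem_Icc.2 (hx0y1.trans hy1x1).le) hy1x1
    exact ⟨hGy1.le, hGx1.le, iff_of_false (fun h => hGy1.ne' h.1) hneg.ne⟩
  · obtain rfl := hx1u x0 hx0 (by linarith)
    obtain rfl := hy1u x0 hx0 (by linarith)
    simp [hzero]
  · obtain ⟨hx1y1, hy1x0⟩ :=
      mem_Ioo_of_sub_eq_sub_of_neg hFam hgap hx0 hx1 hy1 hshift (by linarith)
    have hmono := strictMonoOn_Icc_of_hasDerivAt_add (hGIcc hx1) (hFam.mono (hIcc hx1))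
      (hFbm.mono (hIcc hx1)) hx1z
    have hGy1 := hmono ⟨hx1y1.le, hy1x0.le⟩ (right_mem_Icc.2 (hx1y1.trans hy1x0).le) hy1x0
    have hGx1 := hmono (left_mem_Icc.2 (hx1y1.trans hy1x0).le) ⟨hx1y1.le, hy1x0.le⟩ hx1y1
    exact ⟨hGy1.le, hGx1.le, iff_of_false (fun h => hGy1.ne' h.1) hpos.ne'⟩

/-- let `F = F_a + F_b = F̃_a + F̃_b` be two splittings of `F` on `(0,∞)` into
continuous functions with `F_a, F̃_a` strictly increasing and `F_b, F̃_b` strictly decreasing,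
where `F_a, F̃_a` are differentiable with `F̃_a'(x) > F_a'(x)` for all `x > 0`, and let `G` be
an antiderivative of `F` on `(0,∞)`. Let `x₀ > 0`, let `y₁` be the unique zero in `(0,∞)` of
`x ↦ F̃_a(x) + F̃_b(x₀)` and `x₁` the unique zero in `(0,∞)` of `x ↦ F_a(x) + F_b(x₀)`. Then
`G(x₀) ≥ G(y₁) ≥ G(x₁)`, with equalities iff `x₀` is a critical point of `G`
(i.e. `F(x₀) = 0`). -/
theorem G_two_splittings (Fa Fb tFa tFb G : ℝ → ℝ)
    (hFa : ContinuousOn Fa (Set.Ioi 0)) (hFb : ContinuousOn Fb (Set.Ioi 0))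
    (hFam : StrictMonoOn Fa (Set.Ioi 0)) (hFbm : StrictAntiOn Fb (Set.Ioi 0))
    (htFa : ContinuousOn tFa (Set.Ioi 0)) (htFb : ContinuousOn tFb (Set.Ioi 0))
    (htFam : StrictMonoOn tFa (Set.Ioi 0)) (htFbm : StrictAntiOn tFb (Set.Ioi 0))
    (hsplit : ∀ y > (0 : ℝ), Fa y + Fb y = tFa y + tFb y)
    (Fa' tFa' : ℝ → ℝ)
    (hFa' : ∀ y > (0 : ℝ), HasDerivAt Fa (Fa' y) y)
    (htFa' : ∀ y > (0 : ℝ), HasDerivAt tFa (tFa' y) y)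
    (hlt : ∀ y > (0 : ℝ), Fa' y < tFa' y)
    (hG : ∀ y > (0 : ℝ), HasDerivAt G (Fa y + Fb y) y)
    (x0 x1 y1 : ℝ) (hx0 : 0 < x0)
    (hx1 : 0 < x1) (hx1z : Fa x1 + Fb x0 = 0)
    (hx1u : ∀ z > (0 : ℝ), Fa z + Fb x0 = 0 → z = x1)
    (hy1 : 0 < y1) (hy1z : tFa y1 + tFb x0 = 0)
    (hy1u : ∀ z > (0 : ℝ), tFa z + tFb x0 = 0 → z = y1) :
    G y1 ≤ G x0 ∧ G x1 ≤ G y1 ∧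
    ((G x0 = G y1 ∧ G y1 = G x1) ↔ Fa x0 + Fb x0 = 0) :=
  G_two_splittings_general Fa Fb tFa tFb G hFam hFbm hsplit Fa' tFa' hFa' htFa' hlt hG x0 x1 y1 hx0
    hx1 hx1z hx1u hy1 hy1z hy1u
end

section
/- Let (ν_r, Σ_r)_r be a sequence in (0,∞) × SPD(d) such that (ν_r)_r has a subsequence converging to 0. Then (ν_r, Σ_r)_r is not a minimizing sequence of L, i.e. (L(ν_r, Σ_r))_r does not converge to inf_{(ν,Σ) ∈ (0,∞)×SPD(d)} L(ν, Σ). -/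
/-!
Along `ν → 0⁺` the function `L` tends to `+∞` uniformly in `Σ`, so no sequence with a
subsequence `ν_r → 0` can make `L(ν_r, Σ_r)` converge. Writing `qᵢ = xᵢᵀ Σ⁻¹ xᵢ`, the bounds
`ν log ν ≤ ν ∑ wᵢ log (ν + qᵢ)` and `log qᵢ ≤ log (ν + qᵢ)` give
`L(ν, Σ) ≥ 2 log Γ(ν/2) - 2 log Γ((d+ν)/2) + (d ∑ wᵢ log qᵢ + log det Σ)`.
The bracket is bounded below independently of `Σ`: since `wᵢ ≤ 1/d`, `d ∑ wᵢ log qᵢ` dominates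
`∑_{i ∈ T} log qᵢ` for the set `T` of indices of the `d` smallest `qᵢ`, and Hadamard's inequality
for the Gram matrix `X Σ⁻¹ Xᵀ` of the (linearly independent) samples in `T` gives
`∑_{i ∈ T} log qᵢ ≥ log (det X)² - log det Σ`. Finally `Γ(s) = Γ(s + 1) / s → ∞` as `s → 0⁺`.
-/

open Real Matrix Filter Topology

/-- The negative log-likelihood `L(ν, Σ)` of the Student-t distribution (with `μ = 0`):
`L(ν,Σ) = −2 log Γ((d+ν)/2) + 2 log Γ(ν/2) − ν log ν
  + (d+ν) Σᵢ wᵢ log(ν + xᵢᵀ Σ⁻¹ xᵢ) + log det Σ`. -/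
noncomputable def negLogLik (d n : ℕ) (x : Fin n → Fin d → ℝ) (w : Fin n → ℝ)
    (ν : ℝ) (S : Matrix (Fin d) (Fin d) ℝ) : ℝ :=
  -2 * Real.log (Real.Gamma ((d + ν) / 2)) + 2 * Real.log (Real.Gamma (ν / 2))
    - ν * Real.log ν
    + (d + ν) * ∑ i, w i * Real.log (ν + x i ⬝ᵥ S⁻¹ *ᵥ x i)
    + Real.log S.det

namespace Matrix

variable {m : Type*} [Fintype m] [DecidableEq m]

theorem PosSemidef.det_le_exp_trace_sub_card {A : Matrix m m ℝ} (hA : A.PosSemidef) :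
    A.det ≤ exp (A.trace - Fintype.card m) := by
  rw [hA.1.det_eq_prod_eigenvalues, hA.1.trace_eq_sum_eigenvalues]
  simp only [RCLike.ofReal_real_eq_id, id]
  calc ∏ i, hA.1.eigenvalues i ≤ ∏ i, exp (hA.1.eigenvalues i - 1) :=
        Finset.prod_le_prod (fun i _ => hA.eigenvalues_nonneg i)
          fun i _ => by linarith [add_one_le_exp (hA.1.eigenvalues i - 1)]
    _ = exp (∑ i, hA.1.eigenvalues i - Fintype.card m) := by
        rw [← exp_sum, Finset.sum_sub_distrib]; simp

-- Hadamard's inequality: rescale `A` to unit diagonal, where `det ≤ exp (trace - card) = 1`.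
theorem PosDef.det_le_prod_diag {A : Matrix m m ℝ} (hA : A.PosDef) : A.det ≤ ∏ i, A i i := by
  set D := diagonal fun i => (√(A i i))⁻¹
  have hB : (D * A * D).PosSemidef := by
    simpa [D] using hA.posSemidef.mul_mul_conjTranspose_same D
  have hBdiag : ∀ i, (D * A * D) i i = 1 := fun i => by
    have := hA.diag_pos (i := i)
    simp only [mul_diagonal, diagonal_mul, D]
    field_simp
    rw [sq_sqrt this.le]
  have hdet : (D * A * D).det = A.det / ∏ i, A i i := by
    have hprod : (∏ i, (√(A i i))⁻¹) * (∏ i, (√(A i i))⁻¹) = (∏ i, A i i)⁻¹ := by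
      rw [← Finset.prod_mul_distrib, ← Finset.prod_inv_distrib]
      refine Finset.prod_congr rfl fun i _ => ?_
      rw [← mul_inv, mul_self_sqrt hA.diag_pos.le]
    rw [det_mul, det_mul, det_diagonal, mul_right_comm, hprod, div_eq_inv_mul]
  have htr : (D * A * D).trace = Fintype.card m := by simp [trace, hBdiag]
  have hle := hB.det_le_exp_trace_sub_card
  rw [hdet, htr, sub_self, exp_zero, div_le_one (Finset.prod_pos fun i _ => hA.diag_pos)] at hle
  exact hle

theorem log_det_sq_le_log_det_add_sum_log {X S : Matrix m m ℝ} (hX : X.det ≠ 0)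
    (hS : S.PosDef) : log (X.det ^ 2) ≤ log S.det + ∑ i, log (X i ⬝ᵥ S⁻¹ *ᵥ X i) := by
  have hXunit : IsUnit X := (isUnit_iff_isUnit_det X).mpr hX.isUnit
  have hG : (X * S⁻¹ * Xᵀ).PosDef := by
    simpa using hS.inv.mul_mul_conjTranspose_same (vecMul_injective_iff_isUnit.mpr hXunit)
  have hGdiag : ∀ i, (X * S⁻¹ * Xᵀ) i i = X i ⬝ᵥ S⁻¹ *ᵥ X i := fun i => by
    simp only [mul_apply, transpose_apply, dotProduct, mulVec, Finset.sum_mul, Finset.mul_sum]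
    rw [Finset.sum_comm]
    exact Finset.sum_congr rfl fun _ _ => Finset.sum_congr rfl fun _ _ => by ring
  have hdetG : (X * S⁻¹ * Xᵀ).det = X.det ^ 2 / S.det := by
    rw [det_mul, det_mul, det_transpose, det_nonsing_inv, Ring.inverse_eq_inv']
    ring
  have hlog := log_le_log hG.det_pos hG.det_le_prod_diag
  rw [hdetG, log_div (by positivity) hS.det_pos.ne', log_prod fun i _ => hG.diag_pos.ne'] at hlog
  simp only [hGdiag] at hlog
  linarith

end Matrix

theorem Fin.exists_card_eq_forall_le_of_mem_of_notMem {α : Type*} [LinearOrder α] {n k : ℕ}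
    (a : Fin n → α) (hk : k ≤ n) :
    ∃ T : Finset (Fin n), T.card = k ∧ ∀ i ∈ T, ∀ j ∉ T, a i ≤ a j := by
  refine ⟨(Finset.univ.filter fun m : Fin n => (m : ℕ) < k).map (Tuple.sort a).toEmbedding, ?_,
    fun i hi j hj => ?_⟩
  · rw [Finset.card_map, Fin.card_filter_val_lt, min_eq_right hk]
  · rw [Finset.mem_map_equiv, Finset.mem_filter] at hi hj
    have hij : (Tuple.sort a).symm i ≤ (Tuple.sort a).symm j := by
      rw [Fin.le_def]; simp only [Finset.mem_univ, true_and, not_lt] at hi hj; omega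
    simpa using Tuple.monotone_sort a hij

theorem Finset.sum_le_card_mul_sum_mul {ι : Type*} [Fintype ι] [DecidableEq ι] {T : Finset ι}
    {a w : ι → ℝ} (hT : T.Nonempty) (hsep : ∀ i ∈ T, ∀ j ∉ T, a i ≤ a j) (hw0 : ∀ i, 0 ≤ w i)
    (hwT : ∀ i, T.card * w i ≤ 1) (hw1 : ∑ i, w i = 1) :
    ∑ i ∈ T, a i ≤ T.card * ∑ i, w i * a i := by
  -- `t` separates the values of `a` on `T` from those outside `T`, so that every summand below
  -- is a product of two factors of the same sign.
  set t := T.sup' hT a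
  have hnonneg : 0 ≤ ∑ i, (T.card * w i - if i ∈ T then 1 else 0) * (a i - t) := by
    refine Finset.sum_nonneg fun i _ => ?_
    split_ifs with hi
    · exact mul_nonneg_of_nonpos_of_nonpos (by linarith [hwT i]) (by simpa using T.le_sup' a hi)
    · refine mul_nonneg (by simpa using mul_nonneg T.card.cast_nonneg (hw0 i)) ?_
      exact sub_nonneg.mpr (Finset.sup'_le hT a fun j hj => hsep j hj i hi)
  have hexpand : ∑ i, (T.card * w i - if i ∈ T then 1 else 0) * (a i - t)
      = T.card * ∑ i, w i * a i - ∑ i ∈ T, a i := by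
    simp only [mul_sub, sub_mul, ite_mul, one_mul, zero_mul, Finset.sum_sub_distrib,
      Finset.sum_ite_mem, Finset.univ_inter, mul_assoc, ← Finset.mul_sum, ← Finset.sum_mul, hw1,
      Finset.sum_const, nsmul_eq_mul]
    ring
  linarith

theorem exists_card_eq_sum_le_mul_sum_mul {n k : ℕ} (hk : 0 < k) (a w : Fin n → ℝ)
    (hw0 : ∀ i, 0 ≤ w i) (hwk : ∀ i, k * w i ≤ 1) (hw1 : ∑ i, w i = 1) :
    ∃ T : Finset (Fin n), T.card = k ∧ ∑ i ∈ T, a i ≤ k * ∑ i, w i * a i := by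
  have hkn : k ≤ n := by
    have : (k : ℝ) ≤ n := calc
      (k : ℝ) = ∑ i, k * w i := by rw [← Finset.mul_sum, hw1, mul_one]
      _ ≤ ∑ _i : Fin n, 1 := Finset.sum_le_sum fun i _ => hwk i
      _ = n := by simp
    exact_mod_cast this
  obtain ⟨T, hTk, hsep⟩ := Fin.exists_card_eq_forall_le_of_mem_of_notMem a hkn
  have hT : T.Nonempty := Finset.card_pos.mp (hTk ▸ hk)
  refine ⟨T, hTk, ?_⟩
  subst hTk
  exact Finset.sum_le_card_mul_sum_mul hT hsep hw0 hwk hw1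

theorem Real.tendsto_Gamma_nhdsGT_zero : Tendsto Gamma (𝓝[>] 0) atTop := by
  have hcont : ContinuousAt Gamma 1 :=
    (differentiableAt_Gamma fun m => by linarith [(m.cast_nonneg : (0 : ℝ) ≤ m)]).continuousAt
  have hshift : Tendsto (fun s => Gamma (s + 1)) (𝓝[>] 0) (𝓝 1) := by
    rw [← Gamma_one]
    refine (hcont.tendsto.comp ?_).mono_left nhdsWithin_le_nhds
    simpa using (continuous_add_const (1 : ℝ)).tendsto 0
  refine (hshift.pos_mul_atTop one_pos tendsto_inv_nhdsGT_zero).congr' ?_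
  filter_upwards [self_mem_nhdsWithin] with s (hs : 0 < s)
  rw [Gamma_add_one hs.ne', mul_comm s, mul_assoc, mul_inv_cancel₀ hs.ne', mul_one]

theorem Real.tendsto_log_Gamma_sub_log_Gamma_add {a : ℝ} (ha : 0 < a) :
    Tendsto (fun t => log (Gamma t) - log (Gamma (a + t))) (𝓝[>] 0) atTop := by
  have hcont : ContinuousAt (fun t => log (Gamma (a + t))) 0 := by
    refine ContinuousAt.log ?_ (by simpa using (Gamma_pos_of_pos ha).ne')
    refine ((differentiableAt_Gamma fun m => ?_).continuousAt).comp
      (continuous_const_add a).continuousAt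
    simp only [add_zero]; linarith [(m.cast_nonneg : (0 : ℝ) ≤ m)]
  simpa only [sub_eq_add_neg, Function.comp_apply] using
    (tendsto_log_atTop.comp tendsto_Gamma_nhdsGT_zero).atTop_add
      (hcont.tendsto.mono_left nhdsWithin_le_nhds).neg

theorem exists_le_mul_sum_log_quadForm_add_log_det {d n : ℕ} (hd : 0 < d)
    (x : Fin n → Fin d → ℝ) (w : Fin n → ℝ) (hw0 : ∀ i, 0 ≤ w i) (hw1 : ∑ i, w i = 1)
    (hwd : ∀ i, d * w i ≤ 1)
    (hli : ∀ I : Finset (Fin n), I.card = d → LinearIndependent ℝ (fun i : I => x i)) :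
    ∃ c, ∀ S : Matrix (Fin d) (Fin d) ℝ, S.PosDef →
      c ≤ d * ∑ i, w i * log (x i ⬝ᵥ S⁻¹ *ᵥ x i) + log S.det := by
  obtain ⟨c, hc⟩ := (Set.finite_range fun f : Fin d → Fin n =>
    log ((of fun j => x (f j)).det ^ 2)).bddBelow
  refine ⟨c, fun S hS => ?_⟩
  set q := fun i => x i ⬝ᵥ S⁻¹ *ᵥ x i
  obtain ⟨T, hTd, hT⟩ := exists_card_eq_sum_le_mul_sum_mul hd (fun i => log (q i)) w hw0 hwd hw1
  set e : Fin d ≃ T := (T.equivFinOfCardEq hTd).symm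
  have hX : (of fun j => x (e j)).det ≠ 0 := by
    refine ((isUnit_iff_isUnit_det _).mp (linearIndependent_rows_iff_isUnit.mp ?_)).ne_zero
    exact (hli T hTd).comp e e.injective
  have hsum : ∑ j, log (q (e j)) = ∑ i ∈ T, log (q i) := by
    rw [← Finset.sum_coe_sort T]; exact e.sum_comp fun i : T => log (q i)
  have hgram : log ((of fun j => x (e j)).det ^ 2) ≤ log S.det + ∑ j, log (q (e j)) :=
    log_det_sq_le_log_det_add_sum_log hX hS
  have hcX : c ≤ log ((of fun j => x (e j)).det ^ 2) := hc ⟨fun j => e j, rfl⟩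
  linarith

theorem exists_two_mul_log_Gamma_sub_add_le_negLogLik {d n : ℕ} (hd : 0 < d)
    (x : Fin n → Fin d → ℝ) (w : Fin n → ℝ) (hw0 : ∀ i, 0 ≤ w i) (hw1 : ∑ i, w i = 1)
    (hwd : ∀ i, d * w i ≤ 1)
    (hli : ∀ I : Finset (Fin n), I.card ≤ d → LinearIndependent ℝ (fun i : I => x i)) :
    ∃ c, ∀ ν, 0 < ν → ∀ S : Matrix (Fin d) (Fin d) ℝ, S.PosDef →
      2 * (log (Gamma (ν / 2)) - log (Gamma (d / 2 + ν / 2))) + c ≤ negLogLik d n x w ν S := by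
  obtain ⟨c, hc⟩ := exists_le_mul_sum_log_quadForm_add_log_det hd x w hw0 hw1 hwd
    fun I hI => hli I hI.le
  refine ⟨c, fun ν hν S hS => ?_⟩
  have hq : ∀ i, 0 < x i ⬝ᵥ S⁻¹ *ᵥ x i := fun i => by
    have hxi : x i ≠ 0 :=
      (hli {i} (by rw [Finset.card_singleton]; exact hd)).ne_zero ⟨i, Finset.mem_singleton_self i⟩
    simpa using hS.inv.dotProduct_mulVec_pos hxi
  have hlog_q : ∑ i, w i * log (x i ⬝ᵥ S⁻¹ *ᵥ x i) ≤ ∑ i, w i * log (ν + x i ⬝ᵥ S⁻¹ *ᵥ x i) :=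
    Finset.sum_le_sum fun i _ =>
      mul_le_mul_of_nonneg_left (log_le_log (hq i) (by linarith)) (hw0 i)
  have hlog_ν : log ν ≤ ∑ i, w i * log (ν + x i ⬝ᵥ S⁻¹ *ᵥ x i) := calc
    log ν = ∑ i, w i * log ν := by rw [← Finset.sum_mul, hw1, one_mul]
    _ ≤ _ := Finset.sum_le_sum fun i _ =>
      mul_le_mul_of_nonneg_left (log_le_log hν (by linarith [hq i])) (hw0 i)
  have hcS := hc S hS
  have hd_mul := mul_le_mul_of_nonneg_left hlog_q (Nat.cast_nonneg d : (0 : ℝ) ≤ d)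
  have hν_mul := mul_le_mul_of_nonneg_left hlog_ν hν.le
  rw [negLogLik, add_div, add_mul]
  linarith

/-- under the standing assumption (any `≤ d` samples are linearly independent
and `max wᵢ < 1/d`), if `(ν_r, Σ_r)_r` is a sequence in `(0,∞) × SPD(d)` such that `(ν_r)`
has a subsequence converging to `0`, then `(ν_r, Σ_r)_r` is not a minimizing sequence of `L`,
i.e. `L(ν_r, Σ_r)` does not converge to the infimum of `L` over `(0,∞) × SPD(d)`. -/
theorem not_minimizing_of_nu_subseq_to_zero (d n : ℕ) (hd : 1 ≤ d)
    (x : Fin n → Fin d → ℝ) (w : Fin n → ℝ)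
    (hw : ∀ i, 0 < w i) (hw1 : ∑ i, w i = 1)
    (hli : ∀ I : Finset (Fin n), I.card ≤ d →
      LinearIndependent ℝ (fun i : I => x i))
    (hwd : ∀ i, w i < 1 / d)
    (ν : ℕ → ℝ) (S : ℕ → Matrix (Fin d) (Fin d) ℝ)
    (hν : ∀ r, 0 < ν r) (hS : ∀ r, (S r).PosDef)
    (hsub : ∃ k : ℕ → ℕ, StrictMono k ∧ Tendsto (fun j => ν (k j)) atTop (nhds 0)) :
    ¬ Tendsto (fun r => negLogLik d n x w (ν r) (S r)) atTop
        (nhds (sInf {y : ℝ | ∃ a, 0 < a ∧ ∃ M : Matrix (Fin d) (Fin d) ℝ,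
          M.PosDef ∧ y = negLogLik d n x w a M})) := by
  intro hmin
  obtain ⟨k, hk, hk0⟩ := hsub
  have hdpos : (0 : ℝ) < d := by exact_mod_cast hd
  obtain ⟨c, hc⟩ := exists_two_mul_log_Gamma_sub_add_le_negLogLik hd x w (fun i => (hw i).le) hw1
    (fun i => (le_div_iff₀' hdpos).mp (hwd i).le) hli
  have hhalf : Tendsto (fun j => ν (k j) / 2) atTop (𝓝[>] 0) :=
    tendsto_nhdsWithin_of_tendsto_nhds_of_eventually_within _ (by simpa using hk0.div_const 2)
      (Eventually.of_forall fun j => half_pos (hν (k j)))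
  have hbound :=
    (((tendsto_log_Gamma_sub_log_Gamma_add (half_pos hdpos)).comp hhalf).const_mul_atTop
      two_pos).atTop_add (tendsto_const_nhds (x := c))
  have hL : Tendsto (fun j => negLogLik d n x w (ν (k j)) (S (k j))) atTop atTop :=
    tendsto_atTop_mono (fun j => hc _ (hν (k j)) _ (hS (k j))) hbound
  exact not_tendsto_nhds_of_tendsto_atTop hL _ (hmin.comp hk.tendsto_atTop)
end
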